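/- arXiv:1302.6735 — 11 statements merged into one kernel-verified Lean document; each statement's English description precedes it below -/
import Mathlib

section
/- Let a₁,…,aₙ, b₁,…,bₙ be linear operators on a vector space X such that bᵢ ∘ aⱼ = 0 whenever i ≥ j. Define φ(x) = Σᵢ aᵢ ∘ x ∘ bᵢ for x ∈ L(X). Then φ(x)^{n+1} = 0 for every x ∈ L(X). -/
/-!
Write `y = ∑ i, aᵢ x bᵢ`. Since `bᵢ aⱼ = 0` for `i ≥ j`, we have `y aⱼ = ∑_{i < j} aᵢ x bᵢ aⱼ`,
so by induction `yᵏ aⱼ = 0` whenever `j < k`. In particular `yⁿ aᵢ = 0` for every `i`, and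
`yⁿ⁺¹ = ∑ i, yⁿ aᵢ x bᵢ = 0`.
-/

namespace ElementaryOperator

variable {R : Type*} [Semiring R] {n : ℕ} {a b : Fin n → R}

theorem pow_mul_eq_zero_of_lt (h : ∀ i j : Fin n, j ≤ i → b i * a j = 0) (x : R) {k : ℕ}
    {j : Fin n} (hj : (j : ℕ) < k) : (∑ i, a i * x * b i) ^ k * a j = 0 := by
  induction k generalizing j with
  | zero => omega
  | succ k ih =>
    have term_eq_zero (i : Fin n) : (∑ i, a i * x * b i) ^ k * a i * x * (b i * a j) = 0 := by
      rcases le_or_gt j i with hji | hij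
      · rw [h i j hji, mul_zero]
      · rw [ih (by omega), zero_mul, zero_mul]
    calc (∑ i, a i * x * b i) ^ (k + 1) * a j
        = ∑ i, (∑ i, a i * x * b i) ^ k * a i * x * (b i * a j) := by
          simp only [pow_succ, Finset.sum_mul, Finset.mul_sum, mul_assoc]
      _ = 0 := Finset.sum_eq_zero fun i _ => term_eq_zero i

theorem pow_succ_eq_zero (h : ∀ i j : Fin n, j ≤ i → b i * a j = 0) (x : R) :
    (∑ i, a i * x * b i) ^ (n + 1) = 0 := by
  rw [pow_succ, Finset.mul_sum]
  refine Finset.sum_eq_zero fun i _ => ?_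
  rw [← mul_assoc, ← mul_assoc, pow_mul_eq_zero_of_lt h x i.isLt, zero_mul, zero_mul]

end ElementaryOperator

theorem stmt_1 {X : Type*} [AddCommGroup X] [Module ℂ X]
    (n : ℕ) (a b : Fin n → Module.End ℂ X)
    (h : ∀ i j : Fin n, j ≤ i → b i * a j = 0)
    (x : Module.End ℂ X) :
    (∑ i : Fin n, a i * x * b i) ^ (n + 1) = 0 :=
  ElementaryOperator.pow_succ_eq_zero h x
end

section
/- Let a, b, c, d be linear operators on a vector space X satisfying b∘a = 0, d∘c = 0, and b∘c = 0. Then the elementary operator φ(x) = a x b + c x d on L(X) satisfies φ(x)³ = 0 for all x ∈ L(X). -/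
/-! With `u = a x b` and `v = c x d`, the three relations give `u² = uv = v² = 0`, so
`(u + v)² = vu` and `(u + v)³ = vu² + vuv = 0`. -/

theorem mul_mul_mul_mul_eq_zero_of_mul_eq_zero {R : Type*} [Semiring R] {b c : R}
    (h : b * c = 0) (a x y d : R) : a * x * b * (c * y * d) = 0 := by
  rw [mul_assoc (a * x), ← mul_assoc b, ← mul_assoc b, h, zero_mul, zero_mul, mul_zero]

theorem add_pow_three_eq_zero_of_mul_eq_zero {R : Type*} [Semiring R] {u v : R}
    (hu : u * u = 0) (huv : u * v = 0) (hv : v * v = 0) : (u + v) ^ 3 = 0 := by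
  have hsq : (u + v) ^ 2 = v * u := by
    rw [sq, add_mul, mul_add, mul_add, hu, huv, hv, zero_add, zero_add, add_zero]
  rw [pow_succ, hsq, mul_add, mul_assoc, hu, mul_assoc, huv, mul_zero, add_zero]

theorem stmt_2 {X : Type*} [AddCommGroup X] [Module ℂ X]
    (a b c d : Module.End ℂ X)
    (hba : b * a = 0) (hdc : d * c = 0) (hbc : b * c = 0)
    (x : Module.End ℂ X) :
    (a * x * b + c * x * d) ^ 3 = 0 :=
  add_pow_three_eq_zero_of_mul_eq_zero
    (mul_mul_mul_mul_eq_zero_of_mul_eq_zero hba a x x b)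
    (mul_mul_mul_mul_eq_zero_of_mul_eq_zero hbc a x x d)
    (mul_mul_mul_mul_eq_zero_of_mul_eq_zero hdc c x x d)
end

section
/- Let u₁,u₂,u₃, v₁,v₂,v₃ be linear operators on a complex vector space X, and suppose there exist a vector ζ₀ ∈ X and linearly independent linear functionals f, g on X such that the nine compositions vᵢ∘uⱼ form the matrix [[0, ζ₀⊗g, 0],[ζ₀⊗f, 0, ζ₀⊗g],[0, −ζ₀⊗f, 0]] (i.e., v₁u₁ = 0, v₁u₂ = ζ₀⊗g, v₁u₃ = 0, v₂u₁ = ζ₀⊗f, v₂u₂ = 0, v₂u₃ = ζ₀⊗g, v₃u₁ = 0, v₃u₂ = −ζ₀⊗f, v₃u₃ = 0). Then the elementary operator φ(x) = u₁xv₁ + u₂xv₂ + u₃xv₃ satisfies φ(x)⁵ = 0 for all x ∈ L(X). -/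
/-!
Put `w = x ζ₀`, `A = u₁ w`, `B = u₂ w`, `C = u₃ w`, `α = f w`, `β = g w`. The relations give
`φ (u₁ ξ) = f ξ • B`, `φ (u₂ ξ) = g ξ • A - f ξ • C` and `φ (u₃ ξ) = g ξ • B`, so `φ` maps
`range u₁ + range u₂ + range u₃ ⊇ range φ` into `span {A, B, C}`. There `φ` acts by
`A ↦ α • B`, `B ↦ D`, `C ↦ β • B` with `D = β • A - α • C`, and `φ D = 0`; hence `φ ^ 3`
kills `span {A, B, C}` and `φ ^ 5 = φ ^ 3 ∘ φ ∘ φ = 0`.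
-/

open Submodule

section

variable {R X : Type*} [CommRing R] [AddCommGroup X] [Module R X]

theorem Module.End.span_triple_le_ker_pow_three (φ : Module.End R X) {A B C : X} {α β : R}
    (hA : φ A = α • B) (hB : φ B = β • A - α • C) (hC : φ C = β • B) :
    span R {A, B, C} ≤ LinearMap.ker (φ ^ 3) := by
  have hD : φ (β • A - α • C) = 0 := by
    rw [map_sub, map_smul, map_smul, hA, hC, smul_smul, smul_smul, mul_comm, sub_self]
  have hpow : ∀ y, (φ ^ 3) y = φ (φ (φ y)) := fun y => rfl
  rw [span_le]
  rintro y (rfl | rfl | rfl) <;>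
    simp only [SetLike.mem_coe, LinearMap.mem_ker, hpow, hA, hB, hC, map_smul, hD, smul_zero,
      map_zero]

def elementaryOp (u₁ u₂ u₃ v₁ v₂ v₃ x : Module.End R X) : Module.End R X :=
  u₁ * x * v₁ + u₂ * x * v₂ + u₃ * x * v₃

variable {u₁ u₂ u₃ v₁ v₂ v₃ : Module.End R X} {ζ₀ : X} {f g : Module.Dual R X}
  (x : Module.End R X)

theorem elementaryOp_apply (η : X) :
    elementaryOp u₁ u₂ u₃ v₁ v₂ v₃ x η = u₁ (x (v₁ η)) + u₂ (x (v₂ η)) + u₃ (x (v₃ η)) :=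
  rfl

theorem elementaryOp_apply_u₁ (h11 : v₁ * u₁ = 0) (h21 : ∀ η, (v₂ * u₁) η = f η • ζ₀)
    (h31 : v₃ * u₁ = 0) (ξ : X) :
    elementaryOp u₁ u₂ u₃ v₁ v₂ v₃ x (u₁ ξ) = f ξ • u₂ (x ζ₀) := by
  have e₁ : v₁ (u₁ ξ) = 0 := LinearMap.congr_fun h11 ξ
  have e₂ : v₂ (u₁ ξ) = f ξ • ζ₀ := h21 ξ
  have e₃ : v₃ (u₁ ξ) = 0 := LinearMap.congr_fun h31 ξ
  rw [elementaryOp_apply, e₁, e₂, e₃, map_zero, map_zero, map_zero, map_smul, map_smul,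
    zero_add, add_zero]

theorem elementaryOp_apply_u₂ (h12 : ∀ η, (v₁ * u₂) η = g η • ζ₀) (h22 : v₂ * u₂ = 0)
    (h32 : ∀ η, (v₃ * u₂) η = -(f η • ζ₀)) (ξ : X) :
    elementaryOp u₁ u₂ u₃ v₁ v₂ v₃ x (u₂ ξ) = g ξ • u₁ (x ζ₀) - f ξ • u₃ (x ζ₀) := by
  have e₁ : v₁ (u₂ ξ) = g ξ • ζ₀ := h12 ξ
  have e₂ : v₂ (u₂ ξ) = 0 := LinearMap.congr_fun h22 ξ
  have e₃ : v₃ (u₂ ξ) = -(f ξ • ζ₀) := h32 ξ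
  rw [elementaryOp_apply, e₁, e₂, e₃, map_zero, map_zero, map_neg, map_neg, map_smul,
    map_smul, map_smul, map_smul, add_zero, sub_eq_add_neg]

theorem elementaryOp_apply_u₃ (h13 : v₁ * u₃ = 0) (h23 : ∀ η, (v₂ * u₃) η = g η • ζ₀)
    (h33 : v₃ * u₃ = 0) (ξ : X) :
    elementaryOp u₁ u₂ u₃ v₁ v₂ v₃ x (u₃ ξ) = g ξ • u₂ (x ζ₀) := by
  have e₁ : v₁ (u₃ ξ) = 0 := LinearMap.congr_fun h13 ξ
  have e₂ : v₂ (u₃ ξ) = g ξ • ζ₀ := h23 ξ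
  have e₃ : v₃ (u₃ ξ) = 0 := LinearMap.congr_fun h33 ξ
  rw [elementaryOp_apply, e₁, e₂, e₃, map_zero, map_zero, map_zero, map_smul, map_smul,
    zero_add, add_zero]

end

theorem stmt_3_general {X : Type*} [AddCommGroup X] [Module ℂ X]
    (u₁ u₂ u₃ v₁ v₂ v₃ : Module.End ℂ X) (ζ₀ : X) (f g : Module.Dual ℂ X)
    (h11 : v₁ * u₁ = 0) (h12 : ∀ η, (v₁ * u₂) η = g η • ζ₀) (h13 : v₁ * u₃ = 0)
    (h21 : ∀ η, (v₂ * u₁) η = f η • ζ₀) (h22 : v₂ * u₂ = 0)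
    (h23 : ∀ η, (v₂ * u₃) η = g η • ζ₀)
    (h31 : v₃ * u₁ = 0) (h32 : ∀ η, (v₃ * u₂) η = -(f η • ζ₀)) (h33 : v₃ * u₃ = 0)
    (x : Module.End ℂ X) :
    (u₁ * x * v₁ + u₂ * x * v₂ + u₃ * x * v₃) ^ 5 = 0 := by
  change elementaryOp u₁ u₂ u₃ v₁ v₂ v₃ x ^ 5 = 0
  set φ := elementaryOp u₁ u₂ u₃ v₁ v₂ v₃ x
  have hu₁ : ∀ ξ, φ (u₁ ξ) = f ξ • u₂ (x ζ₀) := elementaryOp_apply_u₁ x h11 h21 h31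
  have hu₂ : ∀ ξ, φ (u₂ ξ) = g ξ • u₁ (x ζ₀) - f ξ • u₃ (x ζ₀) :=
    elementaryOp_apply_u₂ x h12 h22 h32
  have hu₃ : ∀ ξ, φ (u₃ ξ) = g ξ • u₂ (x ζ₀) := elementaryOp_apply_u₃ x h13 h23 h33
  set S := span ℂ {u₁ (x ζ₀), u₂ (x ζ₀), u₃ (x ζ₀)}
  have hA : u₁ (x ζ₀) ∈ S := subset_span (by simp)
  have hB : u₂ (x ζ₀) ∈ S := subset_span (by simp)
  have hC : u₃ (x ζ₀) ∈ S := subset_span (by simp)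
  have hφφ : ∀ η, φ (φ η) ∈ S := by
    intro η
    rw [elementaryOp_apply x η, map_add, map_add, hu₁, hu₂, hu₃]
    exact add_mem (add_mem (smul_mem _ _ hB) (sub_mem (smul_mem _ _ hA) (smul_mem _ _ hC)))
      (smul_mem _ _ hB)
  have hker : S ≤ LinearMap.ker (φ ^ 3) :=
    φ.span_triple_le_ker_pow_three (hu₁ (x ζ₀)) (hu₂ (x ζ₀)) (hu₃ (x ζ₀))
  ext η
  exact hker (hφφ η)

theorem stmt_3 {X : Type*} [AddCommGroup X] [Module ℂ X]
    (u₁ u₂ u₃ v₁ v₂ v₃ : Module.End ℂ X) (ζ₀ : X) (f g : Module.Dual ℂ X)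
    (hfg : LinearIndependent ℂ ![f, g])
    (h11 : v₁ * u₁ = 0) (h12 : ∀ η, (v₁ * u₂) η = g η • ζ₀) (h13 : v₁ * u₃ = 0)
    (h21 : ∀ η, (v₂ * u₁) η = f η • ζ₀) (h22 : v₂ * u₂ = 0)
    (h23 : ∀ η, (v₂ * u₃) η = g η • ζ₀)
    (h31 : v₃ * u₁ = 0) (h32 : ∀ η, (v₃ * u₂) η = -(f η • ζ₀)) (h33 : v₃ * u₃ = 0)
    (x : Module.End ℂ X) :
    (u₁ * x * v₁ + u₂ * x * v₂ + u₃ * x * v₃) ^ 5 = 0 :=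
  stmt_3_general u₁ u₂ u₃ v₁ v₂ v₃ ζ₀ f g h11 h12 h13 h21 h22 h23 h31 h32 h33 x
end

section
/- Let u₁,u₂,u₃, v₁,v₂,v₃ be linear operators on a complex vector space X, and suppose there exist linearly independent vectors ζ₀, ζ₁ ∈ X and a linear functional f on X such that v₁u₁ = 0, v₁u₂ = ζ₁⊗f, v₁u₃ = 0, v₂u₁ = ζ₀⊗f, v₂u₂ = 0, v₂u₃ = ζ₁⊗f, v₃u₁ = 0, v₃u₂ = −ζ₀⊗f, v₃u₃ = 0. Then the elementary operator φ(x) = u₁xv₁ + u₂xv₂ + u₃xv₃ satisfies φ(x)⁵ = 0 for all x ∈ L(X). -/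
/-!
Writing `φ(x) = U · diag(x) · V` for the row `U = (uᵢ)` and the column `V = (vᵢ)` gives
`φ(x)ⁿ⁺¹ = U · diag(x) · (M · diag(x))ⁿ · V` with `M = V U = (vᵢ uⱼ)`.
The entries of `M` are rank-one, `aᵢⱼ ⊗ f`, and `(a ⊗ f) x (b ⊗ f) = f(x b) (a ⊗ f)`, so
`M · diag(x) · M = M · C` for the scalar matrix `C = (f(x aᵢⱼ))` and `(M · diag(x))ᵏ · M = M · Cᵏ`.
Here `C = [[0, β, 0], [α, 0, β], [0, -α, 0]]` with `α = f(x ζ₀)`, `β = f(x ζ₁)`, and `C³ = 0`.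
-/

open Matrix

def elementaryCoeffMatrix {R ι : Type*} [Mul R] (u v : ι → R) : Matrix ι ι R :=
  of fun i j => v i * u j

theorem sum_mul_mul_pow_succ {R ι : Type*} [Semiring R] [Fintype ι] [DecidableEq ι]
    (u v : ι → R) (x : R) (n : ℕ) :
    (∑ i, u i * x * v i) ^ (n + 1) =
      ∑ i, ∑ j,
        u i * x * ((elementaryCoeffMatrix u v * diagonal fun _ => x : Matrix ι ι R) ^ n) i j * v j := by
  induction n with
  | zero => simp [one_apply]
  | succ n ih =>
    rw [pow_succ, ih, pow_succ, ← Matrix.mul_assoc, Finset.sum_mul]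
    refine Finset.sum_congr rfl fun i _ => ?_
    simp only [mul_apply, diagonal_apply, mul_ite, mul_zero, Finset.sum_ite_eq', Finset.mem_univ,
      if_true, elementaryCoeffMatrix, of_apply, Finset.sum_mul, Finset.mul_sum, mul_assoc]

theorem mul_pow_mul_of_mul_mul_eq {M : Type*} [Monoid M] {m d c : M} (h : m * d * m = m * c)
    (n : ℕ) : (m * d) ^ n * m = m * c ^ n := by
  induction n with
  | zero => simp
  | succ n ih => rw [pow_succ', mul_assoc, ih, ← mul_assoc, h, mul_assoc, ← pow_succ']

theorem smulRight_mul_mul_smulRight {R X : Type*} [CommSemiring R] [AddCommMonoid X] [Module R X]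
    (f : Module.Dual R X) (p : Module.End R X) (w w' : X) :
    f.smulRight w * p * f.smulRight w' = f.smulRight w * algebraMap R _ (f (p w')) := by
  ext η
  simp [Module.End.mul_apply, Module.algebraMap_end_apply, smul_smul, mul_comm]

theorem map_smulRight_mul_diagonal_mul_self {R X ι : Type*} [CommSemiring R] [AddCommMonoid X]
    [Module R X] [Fintype ι] [DecidableEq ι] (f : Module.Dual R X) (a : Matrix ι ι X)
    (x : Module.End R X) :
    a.map f.smulRight * diagonal (fun _ => x) * a.map f.smulRight =
      a.map f.smulRight * (a.map fun w => f (x w)).map (algebraMap R _) := by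
  ext1 i k
  rw [mul_apply, mul_apply]
  simp only [mul_diagonal, map_apply, smulRight_mul_mul_smulRight]

theorem fin_three_matrix_pow_three_eq_zero {R : Type*} [CommRing R] (α β : R) :
    !![0, β, 0; α, 0, β; 0, -α, 0] ^ 3 = 0 := by
  ext i j
  fin_cases i <;> fin_cases j <;> simp [pow_succ, mul_apply, Fin.sum_univ_three] <;> ring

theorem sum_mul_mul_pow_eq_zero_of_eq_map_smulRight {R X ι : Type*} [CommSemiring R]
    [AddCommMonoid X] [Module R X] [Fintype ι] [DecidableEq ι] {u v : ι → Module.End R X}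
    {f : Module.Dual R X} {a : Matrix ι ι X} (hvu : elementaryCoeffMatrix u v = a.map f.smulRight)
    {x : Module.End R X} {n : ℕ} (hnil : (a.map fun w => f (x w)) ^ n = 0) :
    (∑ i, u i * x * v i) ^ (n + 2) = 0 := by
  have hMD : (a.map f.smulRight * diagonal fun _ => x) ^ (n + 1) = 0 := by
    rw [pow_succ, ← Matrix.mul_assoc,
      mul_pow_mul_of_mul_mul_eq (map_smulRight_mul_diagonal_mul_self f a x), ← Matrix.map_pow,
      hnil, Matrix.map_zero _ (map_zero _), Matrix.mul_zero, Matrix.zero_mul]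
  simp [sum_mul_mul_pow_succ, hvu, hMD]

theorem stmt_4_general {X : Type*} [AddCommGroup X] [Module ℂ X]
    (u₁ u₂ u₃ v₁ v₂ v₃ : Module.End ℂ X) (ζ₀ ζ₁ : X) (f : Module.Dual ℂ X)
    (h11 : v₁ * u₁ = 0) (h12 : ∀ η, (v₁ * u₂) η = f η • ζ₁) (h13 : v₁ * u₃ = 0)
    (h21 : ∀ η, (v₂ * u₁) η = f η • ζ₀) (h22 : v₂ * u₂ = 0)
    (h23 : ∀ η, (v₂ * u₃) η = f η • ζ₁)
    (h31 : v₃ * u₁ = 0) (h32 : ∀ η, (v₃ * u₂) η = -(f η • ζ₀)) (h33 : v₃ * u₃ = 0)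
    (x : Module.End ℂ X) :
    (u₁ * x * v₁ + u₂ * x * v₂ + u₃ * x * v₃) ^ 5 = 0 := by
  let a : Matrix (Fin 3) (Fin 3) X := !![0, ζ₁, 0; ζ₀, 0, ζ₁; 0, -ζ₀, 0]
  have hvu : elementaryCoeffMatrix ![u₁, u₂, u₃] ![v₁, v₂, v₃] = a.map f.smulRight := by
    ext1 i j
    fin_cases i <;> fin_cases j <;> ext η <;> simp [elementaryCoeffMatrix, a, *]
  have hnil : (a.map fun w => f (x w)) ^ 3 = 0 := by
    convert fin_three_matrix_pow_three_eq_zero (f (x ζ₀)) (f (x ζ₁)) using 2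
    ext1 i j
    fin_cases i <;> fin_cases j <;> simp [a]
  simpa [Fin.sum_univ_three] using sum_mul_mul_pow_eq_zero_of_eq_map_smulRight hvu hnil

theorem stmt_4 {X : Type*} [AddCommGroup X] [Module ℂ X]
    (u₁ u₂ u₃ v₁ v₂ v₃ : Module.End ℂ X) (ζ₀ ζ₁ : X) (f : Module.Dual ℂ X)
    (hζ : LinearIndependent ℂ ![ζ₀, ζ₁])
    (h11 : v₁ * u₁ = 0) (h12 : ∀ η, (v₁ * u₂) η = f η • ζ₁) (h13 : v₁ * u₃ = 0)
    (h21 : ∀ η, (v₂ * u₁) η = f η • ζ₀) (h22 : v₂ * u₂ = 0)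
    (h23 : ∀ η, (v₂ * u₃) η = f η • ζ₁)
    (h31 : v₃ * u₁ = 0) (h32 : ∀ η, (v₃ * u₂) η = -(f η • ζ₀)) (h33 : v₃ * u₃ = 0)
    (x : Module.End ℂ X) :
    (u₁ * x * v₁ + u₂ * x * v₂ + u₃ * x * v₃) ^ 5 = 0 :=
  stmt_4_general u₁ u₂ u₃ v₁ v₂ v₃ ζ₀ ζ₁ f h11 h12 h13 h21 h22 h23 h31 h32 h33 x
end

section
/- Let X be an infinite-dimensional (or any) complex vector space and V₁,…,V_k finitely many finite-dimensional subspaces of L(X). Then there exists a single vector ζ ∈ X such that dim Vᵢζ = lDim Vᵢ simultaneously for all i = 1,…,k, where Vᵢζ = {Tζ : T ∈ Vᵢ} and lDim Vᵢ is the maximum of dim Vᵢη over η ∈ X. -/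
/-!
Rank is lower semicontinuous along lines: for linear maps `f g` out of a finite-dimensional space,
`rank (f + t • g) ≥ rank f` for all but finitely many `t`. Indeed, restricting to a section of `f`
we may assume `f` injective, with a left inverse `p`; then a kernel vector of `f + t • g` is an
eigenvector of `p ∘ g` for the eigenvalue `-t⁻¹`, and there are finitely many eigenvalues.
As `Vζ` is the range of `T ↦ T ζ`, which is linear in `ζ`, over an infinite field a common
maximizer `ζ` for some of the `Vᵢ` can be moved to `ζ + t • η`, with `η` a maximizer for one more
`Vᵢ`, without losing any of the maxima (for the new one, `ζ + t • η` and `η + t⁻¹ • ζ` give the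
same rank).
-/

open Module LinearMap

section Perturbation

variable {K E F : Type*} [Field K] [AddCommGroup E] [Module K E] [AddCommGroup F] [Module K F]
  [FiniteDimensional K E]

theorem LinearMap.finite_setOf_not_injective_add_smul {f : E →ₗ[K] F} (hf : Function.Injective f)
    (g : E →ₗ[K] F) : {t : K | ¬ Function.Injective (f + t • g)}.Finite := by
  obtain ⟨p, hp⟩ := f.exists_leftInverse_of_injective (LinearMap.ker_eq_bot.mpr hf)
  refine ((Module.End.finite_hasEigenvalue (p ∘ₗ g)).image fun μ => -μ⁻¹).subset fun t ht => ?_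
  obtain ⟨c, hc, hc0⟩ : ∃ c, (f + t • g) c = 0 ∧ c ≠ 0 := by
    simpa [injective_iff_map_eq_zero] using ht
  have hpc : c + t • p (g c) = 0 := by
    simpa [hp, ← LinearMap.comp_apply p f] using congrArg p hc
  have ht0 : t ≠ 0 := by rintro rfl; simp_all
  refine ⟨-t⁻¹, Module.End.hasEigenvalue_of_hasEigenvector ⟨?_, hc0⟩, by simp⟩
  rw [Module.End.mem_eigenspace_iff, LinearMap.comp_apply, neg_smul, eq_neg_iff_add_eq_zero,
    add_comm]
  simpa [smul_add, smul_smul, ht0] using congrArg (t⁻¹ • ·) hpc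

theorem LinearMap.finite_setOf_finrank_range_add_smul_lt_left (f g : E →ₗ[K] F) :
    {t : K | finrank K (range (f + t • g)) < finrank K (range f)}.Finite := by
  obtain ⟨s, hs⟩ := f.rangeRestrict.exists_rightInverse_of_surjective f.range_rangeRestrict
  have hfs : f ∘ₗ s = (range f).subtype :=
    LinearMap.ext fun y => congrArg Subtype.val (LinearMap.congr_fun hs y)
  have hinj_s : Function.Injective (f ∘ₗ s) := hfs ▸ (range f).injective_subtype
  refine (finite_setOf_not_injective_add_smul hinj_s (g ∘ₗ s)).subset fun t ht hinj => ?_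
  rw [← LinearMap.smul_comp, ← LinearMap.add_comp] at hinj
  have : finrank K (range f) ≤ finrank K (range (f + t • g)) :=
    calc finrank K (range f) = finrank K (range ((f + t • g) ∘ₗ s)) :=
          (LinearMap.finrank_range_of_inj hinj).symm
      _ ≤ finrank K (range (f + t • g)) := Submodule.finrank_mono (range_comp_le_range _ _)
  exact ht.not_ge this

theorem LinearMap.finite_setOf_finrank_range_add_smul_lt_right (f g : E →ₗ[K] F) :
    {t : K | finrank K (range (g + t • f)) < finrank K (range f)}.Finite := by
  refine (((finite_setOf_finrank_range_add_smul_lt_left f g).image (·⁻¹)).insert 0).subset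
    fun t ht => ?_
  rcases eq_or_ne t 0 with rfl | ht0
  · exact Set.mem_insert 0 _
  refine Or.inr ⟨t⁻¹, ?_, inv_inv t⟩
  have : g + t • f = t • (f + t⁻¹ • g) := by
    rw [smul_add, smul_smul, mul_inv_cancel₀ ht0, one_smul, add_comm]
  rwa [Set.mem_ofPred_eq, ← LinearMap.range_smul _ t ht0, ← this]

end Perturbation

section CommonMaximizer

variable {K X F : Type*} [Field K] [AddCommGroup X] [Module K X] [AddCommGroup F] [Module K F]

theorem LinearMap.exists_forall_finrank_range_apply_le {E : Type*} [AddCommGroup E] [Module K E]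
    [FiniteDimensional K E] (φ : X →ₗ[K] E →ₗ[K] F) :
    ∃ x₀, ∀ x, finrank K (range (φ x)) ≤ finrank K (range (φ x₀)) := by
  have hbdd : BddAbove (Set.range fun x => finrank K (range (φ x))) :=
    ⟨finrank K E, by rintro _ ⟨x, rfl⟩; exact LinearMap.finrank_range_le _⟩
  obtain ⟨x₀, hx₀⟩ := Nat.sSup_mem (Set.range_nonempty _) hbdd
  exact ⟨x₀, fun x => (le_csSup hbdd ⟨x, rfl⟩).trans_eq hx₀.symm⟩

theorem LinearMap.exists_forall_mem_forall_finrank_range_apply_le [Infinite K] {ι : Type*}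
    {E : ι → Type*} [∀ i, AddCommGroup (E i)] [∀ i, Module K (E i)]
    [∀ i, FiniteDimensional K (E i)] (φ : ∀ i, X →ₗ[K] E i →ₗ[K] F) (s : Finset ι) :
    ∃ ζ, ∀ i ∈ s, ∀ x, finrank K (range (φ i x)) ≤ finrank K (range (φ i ζ)) := by
  classical
  induction s using Finset.induction_on with
  | empty => exact ⟨0, by simp⟩
  | insert a s _ ih =>
    obtain ⟨ζ, hζ⟩ := ih
    obtain ⟨η, hη⟩ := (φ a).exists_forall_finrank_range_apply_le
    have hbad :
        ({t : K | finrank K (range (φ a ζ + t • φ a η)) < finrank K (range (φ a η))} ∪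
          ⋃ i ∈ s,
            {t : K | finrank K (range (φ i ζ + t • φ i η)) < finrank K (range (φ i ζ))}).Finite :=
      (finite_setOf_finrank_range_add_smul_lt_right _ _).union <|
        s.finite_toSet.biUnion fun i _ => finite_setOf_finrank_range_add_smul_lt_left _ _
    obtain ⟨t, ht⟩ := hbad.infinite_compl.nonempty
    simp only [Set.mem_compl_iff, Set.mem_union, Set.mem_iUnion, Set.mem_ofPred_eq, not_or,
      not_exists, not_lt] at ht
    refine ⟨ζ + t • η, Finset.forall_mem_insert _ _ _ |>.mpr ⟨fun x => ?_, fun i hi x => ?_⟩⟩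
    · rw [map_add, map_smul]
      exact (hη x).trans ht.1
    · rw [map_add, map_smul]
      exact (hζ i hi x).trans (ht.2 i hi)

end CommonMaximizer

theorem Submodule.span_setOf_exists_mem_apply_eq {K X : Type*} [Field K] [AddCommGroup X]
    [Module K X] (V : Submodule K (Module.End K X)) (x : X) :
    Submodule.span K {y : X | ∃ T ∈ V, T x = y} = LinearMap.range (V.subtype.flip x) := by
  rw [← Submodule.span_eq (range _)]
  congr 1
  ext y
  simp

theorem stmt_7 {X : Type*} [AddCommGroup X] [Module ℂ X]
    (k : ℕ) (V : Fin k → Submodule ℂ (Module.End ℂ X))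
    (hV : ∀ i, FiniteDimensional ℂ (V i)) :
    ∃ ζ : X, ∀ i : Fin k, ∀ η : X,
      Module.finrank ℂ (Submodule.span ℂ {y : X | ∃ T ∈ V i, T η = y}) ≤
      Module.finrank ℂ (Submodule.span ℂ {y : X | ∃ T ∈ V i, T ζ = y}) := by
  obtain ⟨ζ, hζ⟩ :=
    LinearMap.exists_forall_mem_forall_finrank_range_apply_le (fun i => (V i).subtype.flip) .univ
  refine ⟨ζ, fun i η => ?_⟩
  rw [Submodule.span_setOf_exists_mem_apply_eq, Submodule.span_setOf_exists_mem_apply_eq]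
  exact hζ i (Finset.mem_univ i) η
end

section
/- Let X be a complex vector space of dimension at least 2, ζ₀ ∈ X, and f₁, f₂ linearly independent linear functionals on X. Set aᵢ = ζ₀⊗fᵢ (rank-one operators) and let b₁, b₂ ∈ L(X) be arbitrary. If the elementary operator φ(x) = a₁xb₁ + a₂xb₂ is such that φ(x) is quasi-nilpotent (has no nonzero eigenvalue) for every x ∈ L(X), then bᵢ∘aⱼ = 0 for all i, j ∈ {1,2}, equivalently bᵢζ₀ = 0 for i = 1,2. -/
/-!
Since `a₁, a₂` have range `ℂ ζ₀`, every `φ(x) = a₁ x b₁ + a₂ x b₂` maps `ζ₀` to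
`(f₁ (x (b₁ ζ₀)) + f₂ (x (b₂ ζ₀))) • ζ₀`. If `b₁ ζ₀ ≠ 0`, pick a functional `g` with
`g (b₁ ζ₀) = 1` and a vector `v` with `f₁ v = 1`, `f₂ v = 0` (possible as `f₁, f₂` are
independent); for the rank-one `x = g ⊗ v` this gives `φ(x) ζ₀ = ζ₀`, so `1` is an eigenvalue
of `φ(x)`. Symmetrically `b₂ ζ₀ = 0`, and then `bᵢ aⱼ = (bᵢ ζ₀) ⊗ fⱼ = 0`.
-/

open Module

section

variable {K V : Type*} [Field K] [AddCommGroup V] [Module K V]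

theorem Module.Dual.exists_apply_eq_one_apply_eq_zero {f g : Dual K V}
    (hfg : LinearIndependent K ![f, g]) : ∃ v, f v = 1 ∧ g v = 0 := by
  rw [linearIndependent_fin2] at hfg
  have hker : ¬ LinearMap.ker g ≤ LinearMap.ker f := by
    intro hle
    have hspan : f ∈ Submodule.span K (Set.range fun _ : Unit => g) :=
      mem_span_of_iInf_ker_le_ker (by simpa using hle)
    rw [Set.range_const, Submodule.mem_span_singleton] at hspan
    obtain ⟨a, ha⟩ := hspan
    exact hfg.2 a ha
  obtain ⟨w, hgw, hfw⟩ := Set.not_subset.1 hker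
  refine ⟨(f w)⁻¹ • w, ?_, ?_⟩
  · simp [inv_mul_cancel₀ hfw]
  · simp [LinearMap.mem_ker.1 hgw]

theorem Module.End.mul_eq_zero_of_apply_eq_zero {a b : End K V} {f : Dual K V} {ζ : V}
    (ha : ∀ η, a η = f η • ζ) (hb : b ζ = 0) : b * a = 0 := by
  ext η
  simp [ha, hb]

theorem Module.End.elementary_apply_of_rankOne {a₁ a₂ : End K V} {f₁ f₂ : Dual K V} {ζ : V}
    (ha₁ : ∀ η, a₁ η = f₁ η • ζ) (ha₂ : ∀ η, a₂ η = f₂ η • ζ) (x b₁ b₂ : End K V) :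
    (a₁ * x * b₁ + a₂ * x * b₂) ζ = (f₁ (x (b₁ ζ)) + f₂ (x (b₂ ζ))) • ζ := by
  simp [ha₁, ha₂, add_smul]

theorem Module.End.apply_eq_zero_of_forall_not_hasEigenvalue_elementary
    {a₁ a₂ b₁ b₂ : End K V} {f₁ f₂ : Dual K V} {ζ : V}
    (ha₁ : ∀ η, a₁ η = f₁ η • ζ) (ha₂ : ∀ η, a₂ η = f₂ η • ζ)
    (h : ∀ x : End K V, ¬ (a₁ * x * b₁ + a₂ * x * b₂).HasEigenvalue 1)
    {v : V} (hv₁ : f₁ v = 1) (hv₂ : f₂ v = 0) : b₁ ζ = 0 := by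
  by_contra hb
  have hζ : ζ ≠ 0 := by
    rintro rfl
    exact hb (map_zero b₁)
  obtain ⟨g, hg⟩ := Projective.exists_dual_eq_one K hb
  apply h (g.smulRight v)
  refine hasEigenvalue_of_hasEigenvector ⟨mem_eigenspace_iff.2 ?_, hζ⟩
  rw [elementary_apply_of_rankOne ha₁ ha₂]
  simp [hg, hv₁, hv₂]

end

theorem stmt_8_general {X : Type*} [AddCommGroup X] [Module ℂ X]
    (ζ₀ : X) (f₁ f₂ : Module.Dual ℂ X) (hf : LinearIndependent ℂ ![f₁, f₂])
    (a₁ a₂ b₁ b₂ : Module.End ℂ X)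
    (ha₁ : ∀ η, a₁ η = f₁ η • ζ₀) (ha₂ : ∀ η, a₂ η = f₂ η • ζ₀)
    (h : ∀ x : Module.End ℂ X, ∀ c : ℂ, c ≠ 0 →
      ¬ Module.End.HasEigenvalue (a₁ * x * b₁ + a₂ * x * b₂) c) :
    b₁ ζ₀ = 0 ∧ b₂ ζ₀ = 0 ∧
      b₁ * a₁ = 0 ∧ b₁ * a₂ = 0 ∧ b₂ * a₁ = 0 ∧ b₂ * a₂ = 0 := by
  obtain ⟨v₁, hv₁₁, hv₁₂⟩ := Dual.exists_apply_eq_one_apply_eq_zero hf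
  obtain ⟨v₂, hv₂₂, hv₂₁⟩ :=
    Dual.exists_apply_eq_one_apply_eq_zero (LinearIndependent.pair_symm_iff.mp hf :
      LinearIndependent ℂ ![f₂, f₁])
  have hb₁ : b₁ ζ₀ = 0 :=
    End.apply_eq_zero_of_forall_not_hasEigenvalue_elementary ha₁ ha₂
      (fun x => h x 1 one_ne_zero) hv₁₁ hv₁₂
  have hb₂ : b₂ ζ₀ = 0 :=
    End.apply_eq_zero_of_forall_not_hasEigenvalue_elementary ha₂ ha₁
      (fun x hx => h x 1 one_ne_zero (by rwa [add_comm])) hv₂₂ hv₂₁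
  exact ⟨hb₁, hb₂, End.mul_eq_zero_of_apply_eq_zero ha₁ hb₁,
    End.mul_eq_zero_of_apply_eq_zero ha₂ hb₁, End.mul_eq_zero_of_apply_eq_zero ha₁ hb₂,
    End.mul_eq_zero_of_apply_eq_zero ha₂ hb₂⟩

theorem stmt_8 {X : Type*} [AddCommGroup X] [Module ℂ X]
    (hdim : 2 ≤ Module.rank ℂ X)
    (ζ₀ : X) (f₁ f₂ : Module.Dual ℂ X) (hf : LinearIndependent ℂ ![f₁, f₂])
    (a₁ a₂ b₁ b₂ : Module.End ℂ X)
    (ha₁ : ∀ η, a₁ η = f₁ η • ζ₀) (ha₂ : ∀ η, a₂ η = f₂ η • ζ₀)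
    (h : ∀ x : Module.End ℂ X, ∀ c : ℂ, c ≠ 0 →
      ¬ Module.End.HasEigenvalue (a₁ * x * b₁ + a₂ * x * b₂) c) :
    b₁ ζ₀ = 0 ∧ b₂ ζ₀ = 0 ∧
      b₁ * a₁ = 0 ∧ b₁ * a₂ = 0 ∧ b₂ * a₁ = 0 ∧ b₂ * a₂ = 0 :=
  stmt_8_general ζ₀ f₁ f₂ hf a₁ a₂ b₁ b₂ ha₁ ha₂ h
end

section
/- Let X be a complex vector space, ζ₀ ∈ X, and f₁,…,fₙ linearly independent linear functionals on X. Set aᵢ = ζ₀⊗fᵢ and let b₁,…,bₙ ∈ L(X). If for every x ∈ L(X) the operator φ(x) = Σᵢ aᵢ x bᵢ has no nonzero eigenvalue, then bᵢζ₀ = 0 for every i, and hence bᵢ∘aⱼ = 0 for all i, j. -/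
/-!
For `x ∈ L(X)` the operator `φ(x) = Σ aᵢ x bᵢ` maps every vector into `ℂ ζ₀`; on `ζ₀` itself
it acts as the scalar `Σ fᵢ (x (bᵢ ζ₀))`. Since `φ(x)` has no nonzero eigenvalue, this scalar
vanishes for every `x`. Taking `x = η ↦ g(η) w` turns it into `(Σ g(bᵢ ζ₀) fᵢ)(w) = 0` for all
`w`, so linear independence of the `fᵢ` forces `g(bᵢ ζ₀) = 0` for every functional `g`, i.e.
`bᵢ ζ₀ = 0`.
-/

section RankOneCoefficients

variable {R M ι : Type*} [CommRing R] [AddCommGroup M] [Module R M]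
  {ζ : M} {f : ι → Module.Dual R M} {a : ι → Module.End R M}

theorem sum_mul_mul_apply_of_rankOne [Fintype ι] (ha : ∀ i η, a i η = f i η • ζ)
    (x : Module.End R M) (b : ι → Module.End R M) :
    (∑ i, a i * x * b i) ζ = (∑ i, f i (x (b i ζ))) • ζ := by
  simp only [LinearMap.sum_apply, Module.End.mul_apply, ha, Finset.sum_smul]

theorem sum_apply_eq_zero_of_forall_not_hasEigenvalue [Fintype ι]
    (ha : ∀ i η, a i η = f i η • ζ) (hζ : ζ ≠ 0) (b : ι → Module.End R M)
    (h : ∀ x : Module.End R M, ∀ c : R, c ≠ 0 →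
      ¬ Module.End.HasEigenvalue (∑ i, a i * x * b i) c)
    (x : Module.End R M) :
    ∑ i, f i (x (b i ζ)) = 0 := by
  by_contra hc
  refine h x _ hc (Module.End.hasEigenvalue_of_hasEigenvector (x := ζ) ⟨?_, hζ⟩)
  exact Module.End.mem_eigenspace_iff.mpr (sum_mul_mul_apply_of_rankOne ha x b)

theorem mul_eq_zero_of_apply_eq_zero (ha : ∀ i η, a i η = f i η • ζ) {b : Module.End R M}
    (hb : b ζ = 0) (j : ι) : b * a j = 0 := by
  ext η
  simp [ha, hb]

end RankOneCoefficients

theorem eq_zero_of_forall_sum_apply_eq_zero {K V ι : Type*} [Field K] [AddCommGroup V]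
    [Module K V] [Fintype ι] {f : ι → Module.Dual K V} (hf : LinearIndependent K f)
    {v : ι → V} (hv : ∀ x : Module.End K V, ∑ i, f i (x (v i)) = 0) (i : ι) :
    v i = 0 := by
  refine (Module.forall_dual_apply_eq_zero_iff K (v i)).mp fun g => ?_
  have hcomb : ∑ j, g (v j) • f j = 0 := by
    ext w
    simpa [mul_comm] using hv (g.smulRight w)
  exact Fintype.linearIndependent_iff.mp hf (fun j => g (v j)) hcomb i

theorem stmt_9 {X : Type*} [AddCommGroup X] [Module ℂ X]
    (n : ℕ) (ζ₀ : X) (f : Fin n → Module.Dual ℂ X) (hf : LinearIndependent ℂ f)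
    (a b : Fin n → Module.End ℂ X)
    (ha : ∀ i, ∀ η, a i η = f i η • ζ₀)
    (h : ∀ x : Module.End ℂ X, ∀ c : ℂ, c ≠ 0 →
      ¬ Module.End.HasEigenvalue (∑ i : Fin n, a i * x * b i) c) :
    (∀ i, b i ζ₀ = 0) ∧ ∀ i j, b i * a j = 0 := by
  have hbζ : ∀ i, b i ζ₀ = 0 := by
    rcases eq_or_ne ζ₀ 0 with hζ | hζ
    · simp [hζ]
    · exact eq_zero_of_forall_sum_apply_eq_zero hf
        (sum_apply_eq_zero_of_forall_not_hasEigenvalue ha hζ b h)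
  exact ⟨hbζ, fun i j => mul_eq_zero_of_apply_eq_zero ha (hbζ i) j⟩
end

section
/- Let N be a linear subspace of M₃(ℂ) consisting entirely of nilpotent matrices, with dim N = 2. Then either N is simultaneously triangularizable (there exists an invertible P with P⁻¹NP contained in the strictly upper triangular matrices), or N is conjugate to the space {[[0,β,0],[α,0,β],[0,−α,0]] : α,β ∈ ℂ}. -/
/-!
A nilpotent `3 × 3` matrix cubes to zero. If some `C ∈ N` has `C² ≠ 0`, conjugate `C` to the
Jordan block `J` and write `N = span {J, D}`. Polarizing `(s J + t D)³ = 0` in `s, t` gives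
`J²D + JDJ + DJ² = 0` and `JD² + DJD + D²J = 0`, and solving these entrywise leaves two options:
either `D` is strictly upper triangular, or `D` depends on three parameters, and conjugating by a
suitable element `1 + cJ - c²J²` of the centralizer of `J` turns `N` into the exceptional space.
If instead every element of `N` squares to zero, conjugate a nonzero `C` to `J²`; then `D² = 0`
and `J²D + DJ² = 0` force `D` to be strictly upper triangular.
-/

open Matrix Submodule Module

namespace Matrix

theorem pow_card_eq_zero_of_isNilpotent {n R : Type*} [Fintype n] [DecidableEq n] [CommRing R]
    [IsDomain R] {M : Matrix n n R} (hM : IsNilpotent M) : M ^ Fintype.card n = 0 := by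
  have hchar : M.charpoly = Polynomial.X ^ Fintype.card n :=
    sub_eq_zero.1 (isNilpotent_charpoly_sub_pow_of_isNilpotent hM).eq_zero
  simpa [hchar] using M.aeval_self_charpoly

theorem exists_mulVec_ne_zero {m n R : Type*} [Fintype n] [DecidableEq n] [Semiring R]
    {A : Matrix m n R} (hA : A ≠ 0) : ∃ v, A *ᵥ v ≠ 0 := by
  contrapose! hA
  exact ext_of_mulVec_single fun j => by rw [hA, zero_mulVec]

def strictUpperTriangular (R n : Type*) [Semiring R] [LinearOrder n] :
    Submodule R (Matrix n n R) where
  carrier := {M | ∀ i j, j ≤ i → M i j = 0}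
  add_mem' hM hN i j hij := by simp [hM i j hij, hN i j hij]
  zero_mem' _ _ _ := rfl
  smul_mem' c M hM i j hij := by simp [hM i j hij]

def IsStrictlyTriangularizable {n K : Type*} [Fintype n] [DecidableEq n] [LinearOrder n]
    [Field K] (N : Submodule K (Matrix n n K)) : Prop :=
  ∃ P : Matrix n n K, IsUnit P ∧ ∀ M ∈ N, P⁻¹ * M * P ∈ strictUpperTriangular K n

section UnitConj

variable {n K : Type*} [Fintype n] [DecidableEq n] [Field K]

def unitConj (P : (Matrix n n K)ˣ) : Matrix n n K ≃ₐ[K] Matrix n n K :=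
  MulSemiringAction.toAlgEquiv K _ (ConjAct.toConjAct P⁻¹)

theorem unitConj_apply (P : (Matrix n n K)ˣ) (M : Matrix n n K) :
    unitConj P M = (P : Matrix n n K)⁻¹ * M * P := by
  simp [unitConj, ConjAct.units_smul_def, coe_units_inv]

theorem unitConj_mul (P Q : (Matrix n n K)ˣ) (M : Matrix n n K) :
    unitConj (P * Q) M = unitConj Q (unitConj P M) := by
  simp [unitConj_apply, mul_inv_rev, Matrix.mul_assoc]

theorem unitConj_eq_iff_mul_eq {P : (Matrix n n K)ˣ} {M T : Matrix n n K} :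
    unitConj P M = T ↔ M * P = P * T := by
  rw [unitConj_apply, ← coe_units_inv, Matrix.mul_assoc, Units.inv_mul_eq_iff_eq_mul]

theorem unitConj_eq_iff_eq_mul_inv {P : (Matrix n n K)ˣ} {M T : Matrix n n K} :
    unitConj P M = T ↔ M = P * T * (P : Matrix n n K)⁻¹ := by
  rw [unitConj_eq_iff_mul_eq, ← coe_units_inv, Units.eq_mul_inv_iff_mul_eq]

theorem exists_unitConj_eq_of_linearIndependent {A T : Matrix n n K} {v : n → n → K}
    (hv : LinearIndependent K v) (hA : ∀ k, A *ᵥ v k = ∑ j, T j k • v j) :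
    ∃ P, unitConj P A = T := by
  have hP : IsUnit (of v)ᵀ := by
    rwa [isUnit_transpose, ← linearIndependent_rows_iff_isUnit]
  refine ⟨hP.unit, unitConj_eq_iff_mul_eq.2 ?_⟩
  ext i k
  have hik := congrFun (hA k) i
  simp only [mulVec, dotProduct, Finset.sum_apply, Pi.smul_apply, smul_eq_mul] at hik
  simpa [mul_apply, mul_comm] using hik

theorem forall_pow_unitConj_eq_zero {C D : Matrix n n K} {k : ℕ}
    (h : ∀ M ∈ span K {C, D}, M ^ k = 0) (P : (Matrix n n K)ˣ) (s t : K) :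
    (s • unitConj P C + t • unitConj P D) ^ k = 0 := by
  rw [← map_smul, ← map_smul, ← map_add, ← map_pow, h _ (mem_span_pair.2 ⟨s, t, rfl⟩),
    map_zero]

theorem isStrictlyTriangularizable_of_unitConj [LinearOrder n] {C D : Matrix n n K}
    {P : (Matrix n n K)ˣ} (hC : unitConj P C ∈ strictUpperTriangular K n)
    (hD : unitConj P D ∈ strictUpperTriangular K n) :
    IsStrictlyTriangularizable (span K {C, D}) := by
  refine ⟨P, P.isUnit, fun M hM => ?_⟩
  obtain ⟨s, t, rfl⟩ := mem_span_pair.1 hM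
  rw [← unitConj_apply, map_add, map_smul, map_smul]
  exact add_mem (smul_mem _ s hC) (smul_mem _ t hD)

end UnitConj

end Matrix

theorem Submodule.exists_eq_span_pair {K V : Type*} [Field K] [AddCommGroup V] [Module K V]
    [FiniteDimensional K V] {N : Submodule K V} (hN : finrank K N = 2) {C : V} (hC : C ∈ N)
    (hC0 : C ≠ 0) : ∃ D, N = span K {C, D} := by
  have hCN : K ∙ C < N := lt_of_le_of_finrank_lt_finrank
    ((span_singleton_le_iff_mem _ _).2 hC) (by rw [finrank_span_singleton hC0, hN]; norm_num)
  obtain ⟨D, hD, hDC⟩ := SetLike.exists_of_lt hCN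
  have hlt : K ∙ C < span K {C, D} :=
    lt_of_le_of_ne (span_mono (by simp)) fun h => hDC (h ▸ subset_span (by simp))
  refine ⟨D, (eq_of_le_of_finrank_le (span_le.2 ?_) ?_).symm⟩
  · simp [Set.insert_subset_iff, hC, hD]
  · have := finrank_lt_finrank_of_lt hlt
    rw [finrank_span_singleton hC0] at this
    omega

section Polarization

variable {K R : Type*} [Field K] [Ring R] [Algebra K R] {X Y : R}

theorem anticomm_of_forall_sq_eq_zero (h : ∀ s t : K, (s • X + t • Y) ^ 2 = 0) :
    X * Y + Y * X = 0 := by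
  have h11 := h 1 1
  have h10 := h 1 0
  have h01 := h 0 1
  simp only [one_smul, zero_smul, add_zero, zero_add, sq] at h11 h10 h01
  calc X * Y + Y * X = (X + Y) * (X + Y) - X * X - Y * Y := by noncomm_ring
    _ = 0 := by rw [h11, h10, h01]; simp

theorem cube_polarization [CharZero K] (h : ∀ s t : K, (s • X + t • Y) ^ 3 = 0) :
    X ^ 2 * Y + X * Y * X + Y * X ^ 2 = 0 ∧ X * Y ^ 2 + Y * X * Y + Y ^ 2 * X = 0 := by
  have hX : X ^ 3 = 0 := by simpa using h 1 0
  have hY : Y ^ 3 = 0 := by simpa using h 0 1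
  have hplus : (X + Y) ^ 3 = 0 := by simpa using h 1 1
  have hminus : (X - Y) ^ 3 = 0 := by simpa [sub_eq_add_neg] using h 1 (-1)
  have eq_zero_of_two_smul_eq_zero : ∀ Z : R, (2 : K) • Z = 0 → Z = 0 := fun Z hZ =>
    (smul_eq_zero.1 hZ).resolve_left two_ne_zero
  constructor <;> refine eq_zero_of_two_smul_eq_zero _ ?_ <;> rw [two_smul]
  · calc _ = (X + Y) ^ 3 - (X - Y) ^ 3 - 2 * Y ^ 3 := by noncomm_ring
      _ = 0 := by rw [hplus, hminus, hY]; simp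
  · calc _ = (X + Y) ^ 3 + (X - Y) ^ 3 - 2 * X ^ 3 := by noncomm_ring
      _ = 0 := by rw [hplus, hminus, hX]; simp

end Polarization

section ThreeByThree

variable {K : Type*} [Field K]

def jordanBlock3 : Matrix (Fin 3) (Fin 3) K := !![0, 1, 0; 0, 0, 1; 0, 0, 0]

def exceptional (α β : K) : Matrix (Fin 3) (Fin 3) K := !![0, β, 0; α, 0, β; 0, -α, 0]

theorem exists_unitConj_eq_jordanBlock3 {A : Matrix (Fin 3) (Fin 3) K} (hA3 : A ^ 3 = 0)
    (hA2 : A ^ 2 ≠ 0) : ∃ P, unitConj P A = jordanBlock3 := by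
  obtain ⟨v, hv⟩ := exists_mulVec_ne_zero hA2
  have hA4 : A ^ 4 = 0 := pow_eq_zero_of_le (by norm_num) hA3
  refine exists_unitConj_eq_of_linearIndependent (v := ![A ^ 2 *ᵥ v, A *ᵥ v, v]) ?_ ?_
  · rw [Fintype.linearIndependent_iff]
    intro c hc
    simp only [Fin.sum_univ_three] at hc
    have happly : ∀ B : Matrix (Fin 3) (Fin 3) K,
        c 0 • (B * A ^ 2) *ᵥ v + c 1 • (B * A) *ᵥ v + c 2 • B *ᵥ v = 0 := fun B => by
      simpa [mulVec_add, mulVec_smul, mulVec_mulVec] using congrArg (B *ᵥ ·) hc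
    have h2 : c 2 = 0 := by
      have h := happly (A ^ 2)
      rw [← pow_add, ← pow_succ, hA3, hA4] at h
      simpa [hv] using h
    have h1 : c 1 = 0 := by
      have h := happly A
      rw [← pow_succ', ← sq, hA3] at h
      simpa [hv, h2] using h
    have h0 : c 0 = 0 := by simpa [hv, h1, h2] using happly 1
    intro i; fin_cases i <;> assumption
  · intro k
    fin_cases k <;>
      simp [Fin.sum_univ_three, jordanBlock3, mulVec_mulVec, ← pow_succ', ← sq, hA3]

theorem exists_mulVec_eq_zero_notMem_span {A : Matrix (Fin 3) (Fin 3) K} (hA2 : A ^ 2 = 0)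
    (w : Fin 3 → K) : ∃ x, A *ᵥ x = 0 ∧ x ∉ K ∙ (A *ᵥ w) := by
  have hrange : LinearMap.range A.mulVecLin ≤ LinearMap.ker A.mulVecLin := by
    rintro _ ⟨z, rfl⟩
    simp [mulVec_mulVec, ← sq, hA2]
  have hlt : K ∙ (A *ᵥ w) < LinearMap.ker A.mulVecLin := by
    refine lt_of_le_of_finrank_lt_finrank
      ((span_singleton_le_iff_mem _ _).2 (hrange ⟨w, rfl⟩)) ?_
    have hsum := LinearMap.finrank_range_add_finrank_ker A.mulVecLin
    have hle := Submodule.finrank_mono hrange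
    have hone := finrank_span_le_card (R := K) ({A *ᵥ w} : Set (Fin 3 → K))
    simp only [finrank_fin_fun, Set.toFinset_singleton, Finset.card_singleton] at hsum hone
    omega
  exact SetLike.exists_of_lt hlt

theorem exists_unitConj_eq_of_sq_eq_zero {A : Matrix (Fin 3) (Fin 3) K} (hA2 : A ^ 2 = 0)
    (hA : A ≠ 0) : ∃ P, unitConj P A = jordanBlock3 ^ 2 := by
  obtain ⟨w, hw⟩ := exists_mulVec_ne_zero hA
  obtain ⟨x, hx, hxw⟩ := exists_mulVec_eq_zero_notMem_span hA2 w
  have hAw : A *ᵥ (A *ᵥ w) = 0 := by rw [mulVec_mulVec, ← sq, hA2, zero_mulVec]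
  refine exists_unitConj_eq_of_linearIndependent (v := ![A *ᵥ w, x, w]) ?_ ?_
  · rw [Fintype.linearIndependent_iff]
    intro c hc
    simp only [Fin.sum_univ_three] at hc
    have h2 : c 2 = 0 := by
      simpa [mulVec_add, mulVec_smul, hAw, hx, hw] using congrArg (A *ᵥ ·) hc
    have h1 : c 1 = 0 := by
      by_contra h1
      refine hxw (mem_span_singleton.2 ⟨-(c 0 / c 1), ?_⟩)
      rw [← smul_right_inj h1, smul_smul, mul_neg, mul_div_cancel₀ _ h1, neg_smul,
        neg_eq_iff_add_eq_zero]
      simpa [h2] using hc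
    have h0 : c 0 = 0 := by simpa [h1, h2, hw] using hc
    intro i; fin_cases i <;> assumption
  · intro k
    fin_cases k <;> simp [Fin.sum_univ_three, jordanBlock3, sq, hAw, hx]

theorem mem_strictUpperTriangular_fin_three {M : Matrix (Fin 3) (Fin 3) K} (h00 : M 0 0 = 0)
    (h10 : M 1 0 = 0) (h11 : M 1 1 = 0) (h20 : M 2 0 = 0) (h21 : M 2 1 = 0) (h22 : M 2 2 = 0) :
    M ∈ strictUpperTriangular K (Fin 3) := by
  intro i j hij
  fin_cases i <;> fin_cases j <;> simp_all

theorem jordanBlock3_sq :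
    (jordanBlock3 : Matrix (Fin 3) (Fin 3) K) ^ 2 = !![0, 0, 1; 0, 0, 0; 0, 0, 0] := by
  ext i j
  fin_cases i <;> fin_cases j <;> simp [jordanBlock3, sq, mul_apply, Fin.sum_univ_three]

theorem jordanBlock3_mem_strictUpperTriangular :
    (jordanBlock3 : Matrix (Fin 3) (Fin 3) K) ∈ strictUpperTriangular K (Fin 3) :=
  mem_strictUpperTriangular_fin_three rfl rfl rfl rfl rfl rfl

theorem jordanBlock3_sq_mem_strictUpperTriangular :
    (jordanBlock3 : Matrix (Fin 3) (Fin 3) K) ^ 2 ∈ strictUpperTriangular K (Fin 3) := by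
  rw [jordanBlock3_sq]
  exact mem_strictUpperTriangular_fin_three rfl rfl rfl rfl rfl rfl

theorem mem_strictUpperTriangular_of_sq_eq_zero_of_anticomm {D : Matrix (Fin 3) (Fin 3) K}
    (hD : D ^ 2 = 0) (hJD : jordanBlock3 ^ 2 * D + D * jordanBlock3 ^ 2 = 0) :
    D ∈ strictUpperTriangular K (Fin 3) := by
  have e := fun i j => congr_fun₂ hJD i j
  have f := fun i j => congr_fun₂ hD i j
  rw [jordanBlock3_sq] at e
  simp only [sq, mul_apply, Fin.sum_univ_three, Matrix.add_apply] at e f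
  have h20 : D 2 0 = 0 := by simpa using e 0 0
  have h21 : D 2 1 = 0 := by simpa using e 0 1
  have h10 : D 1 0 = 0 := by simpa using e 1 2
  have h00 : D 0 0 = 0 := pow_eq_zero_iff two_ne_zero |>.1 <| by
    simpa [h10, h20, sq] using f 0 0
  have h11 : D 1 1 = 0 := pow_eq_zero_iff two_ne_zero |>.1 <| by
    simpa [h10, h21, sq] using f 1 1
  have h22 : D 2 2 = 0 := by simpa [h00] using e 0 2
  exact mem_strictUpperTriangular_fin_three h00 h10 h11 h20 h21 h22

theorem mem_strictUpperTriangular_or_eq_of_jordanBlock3 {D : Matrix (Fin 3) (Fin 3) K}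
    (h1 : jordanBlock3 ^ 2 * D + jordanBlock3 * D * jordanBlock3 + D * jordanBlock3 ^ 2 = 0)
    (h2 : jordanBlock3 * D ^ 2 + D * jordanBlock3 * D + D ^ 2 * jordanBlock3 = 0)
    (h3 : D ^ 3 = 0) :
    D ∈ strictUpperTriangular K (Fin 3) ∨ ∃ a c q : K, a ≠ 0 ∧
      D = !![c * a, q, c ^ 3 * a; a, -2 * c * a, q + 3 * c ^ 2 * a; 0, -a, c * a] := by
  have e1 := fun i j => congr_fun₂ h1 i j
  have e2 := fun i j => congr_fun₂ h2 i j
  have e3 := fun i j => congr_fun₂ h3 i j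
  rw [jordanBlock3_sq] at e1
  simp only [jordanBlock3, pow_succ, pow_zero, one_mul, mul_apply, Fin.sum_univ_three,
    Matrix.add_apply] at e1 e2 e3
  have h20 : D 2 0 = 0 := by simpa using e1 0 0
  have h21 : D 2 1 = -D 1 0 := by linear_combination (by simpa using e1 0 1 : D 2 1 + D 1 0 = 0)
  have h22 : D 2 2 = -D 0 0 - D 1 1 := by
    linear_combination (by simpa using e1 0 2 : D 2 2 + D 1 1 + D 0 0 = 0)
  by_cases ha : D 1 0 = 0
  · left
    have h21' : D 2 1 = 0 := by rw [h21, ha, neg_zero]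
    have h00 : D 0 0 = 0 := pow_eq_zero_iff three_ne_zero |>.1 <| by
      linear_combination (by simpa [ha, h20] using e3 0 0 : D 0 0 * D 0 0 * D 0 0 = 0)
    have h11 : D 1 1 = 0 := pow_eq_zero_iff three_ne_zero |>.1 <| by
      linear_combination (by simpa [ha, h20, h21'] using e3 1 1 : D 1 1 * D 1 1 * D 1 1 = 0)
    refine mem_strictUpperTriangular_fin_three h00 ha h11 h20 h21' ?_
    rw [h22, h00, h11, sub_zero, neg_zero]
  · right
    have h11 : D 1 1 = -2 * D 0 0 := by
      have e200 := e2 0 0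
      simp only [of_apply, cons_val', cons_val_zero, cons_val_one, cons_val, cons_val_fin_one,
        Matrix.zero_apply, h20, mul_zero, zero_mul, mul_one, one_mul, add_zero, zero_add] at e200
      refine mul_left_cancel₀ ha ?_
      linear_combination e200
    have e201 := e2 0 1
    have e300 := e3 0 0
    simp only [of_apply, cons_val', cons_val_zero, cons_val_one, cons_val, cons_val_fin_one,
      Matrix.zero_apply, h20, h21, h11, mul_zero, zero_mul, mul_one, one_mul, add_zero, zero_add]
      at e201 e300
    obtain ⟨c, hc⟩ : ∃ c, D 0 0 = c * D 1 0 :=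
      ⟨D 0 0 / D 1 0, (div_mul_cancel₀ _ ha).symm⟩
    have h12 : D 1 2 = D 0 1 + 3 * c ^ 2 * D 1 0 := by
      refine mul_left_cancel₀ ha ?_
      linear_combination -e201 + 3 * (c * D 1 0 + D 0 0) * hc
    have h02 : D 0 2 = c ^ 3 * D 1 0 := by
      refine mul_left_cancel₀ (pow_ne_zero 2 ha) ?_
      linear_combination -e300 + (D 0 0 ^ 2 + D 0 0 * c * D 1 0 + c ^ 2 * D 1 0 ^ 2) * hc
    refine ⟨D 1 0, c, D 0 1, ha, ?_⟩
    ext i j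
    fin_cases i <;> fin_cases j <;> simp [h02, h11, h12, h20, h21, h22, hc] <;> ring

theorem exists_unitConj_eq_exceptional (a c q : K) :
    ∃ P, unitConj P jordanBlock3 = jordanBlock3 ∧
      unitConj P !![c * a, q, c ^ 3 * a; a, -2 * c * a, q + 3 * c ^ 2 * a; 0, -a, c * a] =
        exceptional a q := by
  have hQ : IsUnit !![1, c, -c ^ 2; 0, 1, c; 0, 0, (1 : K)] := by
    simp [isUnit_iff_isUnit_det, det_fin_three]
  refine ⟨hQ.unit, unitConj_eq_iff_mul_eq.2 ?_, unitConj_eq_iff_mul_eq.2 ?_⟩ <;>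
  · ext i j
    fin_cases i <;> fin_cases j <;>
      simp [jordanBlock3, exceptional, mul_apply, Fin.sum_univ_three] <;> ring

theorem smul_add_smul_exceptional (s t α β α' β' : K) :
    s • exceptional α β + t • exceptional α' β' =
      exceptional (s * α + t * α') (s * β + t * β') := by
  ext i j
  fin_cases i <;> fin_cases j <;> simp [exceptional, add_comm]

theorem jordanBlock3_eq_exceptional :
    (jordanBlock3 : Matrix (Fin 3) (Fin 3) K) = exceptional 0 1 := by
  simp [jordanBlock3, exceptional]

theorem mem_span_jordanBlock3_exceptional_iff {a q : K} (ha : a ≠ 0)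
    {M : Matrix (Fin 3) (Fin 3) K} :
    M ∈ span K {jordanBlock3, exceptional a q} ↔ ∃ α β, M = exceptional α β := by
  simp_rw [mem_span_pair, jordanBlock3_eq_exceptional, smul_add_smul_exceptional]
  constructor
  · rintro ⟨s, t, rfl⟩
    exact ⟨_, _, rfl⟩
  · rintro ⟨α, β, rfl⟩
    refine ⟨β - α / a * q, α / a, ?_⟩
    congr 1 <;> field_simp <;> ring

def IsConjExceptional (N : Submodule K (Matrix (Fin 3) (Fin 3) K)) : Prop :=
  ∃ P : Matrix (Fin 3) (Fin 3) K, IsUnit P ∧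
    ∀ M, M ∈ N ↔ ∃ α β, M = P * exceptional α β * P⁻¹

theorem isConjExceptional_of_unitConj {C D : Matrix (Fin 3) (Fin 3) K}
    {P : (Matrix (Fin 3) (Fin 3) K)ˣ} {a q : K} (ha : a ≠ 0) (hC : unitConj P C = jordanBlock3)
    (hD : unitConj P D = exceptional a q) :
    IsConjExceptional (span K {C, D}) := by
  refine ⟨P, P.isUnit, fun M => ?_⟩
  simp_rw [← unitConj_eq_iff_eq_mul_inv]
  rw [← mem_span_jordanBlock3_exceptional_iff ha, ← hC, ← hD]
  simp_rw [mem_span_pair, ← map_smul, ← map_add, (unitConj P).injective.eq_iff]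

theorem isStrictlyTriangularizable_of_forall_sq_eq_zero
    {N : Submodule K (Matrix (Fin 3) (Fin 3) K)} (hsq : ∀ M ∈ N, M ^ 2 = 0)
    (hdim : finrank K N = 2) :
    IsStrictlyTriangularizable N := by
  obtain ⟨C, hC, hC0⟩ := exists_mem_ne_zero_of_ne_bot (p := N) (by rintro rfl; simp at hdim)
  obtain ⟨D, rfl⟩ := exists_eq_span_pair hdim hC hC0
  obtain ⟨P, hPC⟩ := exists_unitConj_eq_of_sq_eq_zero (hsq C hC) hC0
  have hsq' := forall_pow_unitConj_eq_zero hsq P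
  rw [hPC] at hsq'
  exact isStrictlyTriangularizable_of_unitConj
    (hPC ▸ jordanBlock3_sq_mem_strictUpperTriangular)
    (mem_strictUpperTriangular_of_sq_eq_zero_of_anticomm (by simpa using hsq' 0 1)
      (anticomm_of_forall_sq_eq_zero hsq'))

theorem isStrictlyTriangularizable_or_isConjExceptional [CharZero K]
    {N : Submodule K (Matrix (Fin 3) (Fin 3) K)} (hcube : ∀ M ∈ N, M ^ 3 = 0)
    (hdim : finrank K N = 2) {C : Matrix (Fin 3) (Fin 3) K} (hC : C ∈ N) (hC2 : C ^ 2 ≠ 0) :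
    IsStrictlyTriangularizable N ∨ IsConjExceptional N := by
  obtain ⟨D, rfl⟩ := exists_eq_span_pair hdim hC (by rintro rfl; simp at hC2)
  obtain ⟨P, hPC⟩ := exists_unitConj_eq_jordanBlock3 (hcube C hC) hC2
  have hcube' := forall_pow_unitConj_eq_zero hcube P
  rw [hPC] at hcube'
  obtain ⟨h1, h2⟩ := cube_polarization hcube'
  rcases mem_strictUpperTriangular_or_eq_of_jordanBlock3 h1 h2 (by simpa using hcube' 0 1) with
    hD | ⟨a, c, q, ha, hD⟩
  · exact .inl (isStrictlyTriangularizable_of_unitConj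
      (hPC ▸ jordanBlock3_mem_strictUpperTriangular) hD)
  · obtain ⟨Q, hQJ, hQD⟩ := exists_unitConj_eq_exceptional a c q
    have hC' : unitConj (P * Q) C = jordanBlock3 := by rw [unitConj_mul, hPC, hQJ]
    have hD' : unitConj (P * Q) D = exceptional a q := by rw [unitConj_mul, hD, hQD]
    exact .inr (isConjExceptional_of_unitConj ha hC' hD')

end ThreeByThree

theorem stmt_10 (N : Submodule ℂ (Matrix (Fin 3) (Fin 3) ℂ))
    (hnil : ∀ M ∈ N, IsNilpotent M)
    (hdim : Module.finrank ℂ N = 2) :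
    (∃ P : Matrix (Fin 3) (Fin 3) ℂ, IsUnit P ∧
      ∀ M ∈ N, ∀ i j : Fin 3, j ≤ i → (P⁻¹ * M * P) i j = 0) ∨
    (∃ P : Matrix (Fin 3) (Fin 3) ℂ, IsUnit P ∧
      ∀ M, M ∈ N ↔ ∃ α β : ℂ, M = P * !![0, β, 0; α, 0, β; 0, -α, 0] * P⁻¹) := by
  by_cases h : ∃ C ∈ N, C ^ 2 ≠ 0
  · obtain ⟨C, hC, hC2⟩ := h
    exact isStrictlyTriangularizable_or_isConjExceptional
      (fun M hM => by simpa using pow_card_eq_zero_of_isNilpotent (hnil M hM)) hdim hC hC2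
  · push Not at h
    exact .inl (isStrictlyTriangularizable_of_forall_sq_eq_zero h hdim)
end

section
/- Let X be a complex vector space and a₁,…,aₙ, b₁,…,bₙ, u₁,…,uₙ, v₁,…,vₙ ∈ L(X) with {a₁,…,aₙ} and {u₁,…,uₙ} both linearly independent and span{a₁,…,aₙ} = span{u₁,…,uₙ}. If Σᵢ aᵢ x bᵢ = Σᵢ uᵢ x vᵢ for all x ∈ L(X), then there is an invertible matrix P ∈ Mₙ(ℂ) with (vᵢ∘uⱼ)ᵢⱼ = P⁻¹ (bᵢ∘aⱼ)ᵢⱼ P as n×n matrices over L(X), where P is the change-of-basis matrix between the two bases (uᵢ = Σⱼ Pⱼᵢ aⱼ gives vᵢ accordingly). -/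
/-!
Both families `a` and `u` are bases of the same finite-dimensional space of operators, so
`uᵢ = ∑ⱼ Pⱼᵢ aⱼ` for an invertible scalar matrix `P`. Substituting this into the identity of
elementary operators gives `∑ⱼ aⱼ x (bⱼ - ∑ᵢ Pⱼᵢ vᵢ) = 0` for all `x`; testing against rank-one
operators `x = f(·) η` turns this into a scalar linear relation among the `aⱼ`, so `bⱼ = ∑ᵢ Pⱼᵢ vᵢ`.
Hence `vᵢ = ∑ₖ (P⁻¹)ᵢₖ bₖ`, and multiplying out `vᵢ uⱼ` gives the conjugation formula.
-/

open Finset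

section

variable {K X : Type*} [Field K] [AddCommGroup X] [Module K X] {ι : Type*} [Fintype ι]

lemma LinearIndependent.eq_zero_of_forall_sum_mul_mul_eq_zero {a : ι → Module.End K X}
    (ha : LinearIndependent K a) {c : ι → Module.End K X}
    (h : ∀ x : Module.End K X, ∑ i, a i * x * c i = 0) (i : ι) : c i = 0 := by
  ext ξ
  rw [LinearMap.zero_apply, ← Module.forall_dual_apply_eq_zero_iff K]
  intro f
  -- With `x = f(·) η` the hypothesis reads `∑ⱼ f (cⱼ ξ) • aⱼ η = 0`.
  have hrel : ∑ j, f (c j ξ) • a j = 0 := by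
    ext η
    simpa [LinearMap.sum_apply, LinearMap.smulRight_apply] using
      LinearMap.congr_fun (h (f.smulRight η)) ξ
  exact Fintype.linearIndependent_iff.mp ha _ hrel i

lemma exists_isUnit_matrix_of_span_eq [DecidableEq ι] {M : Type*} [AddCommGroup M] [Module K M]
    {a u : ι → M} (ha : LinearIndependent K a) (hu : LinearIndependent K u)
    (hspan : Submodule.span K (Set.range a) = Submodule.span K (Set.range u)) :
    ∃ P : Matrix ι ι K, IsUnit P ∧ ∀ i, u i = ∑ j, P j i • a j := by
  let A := Module.Basis.span ha
  let U := (Module.Basis.span hu).map (LinearEquiv.ofEq _ _ hspan.symm)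
  have hA : ∀ j, (A j : M) = a j := fun j => by simp [A, Module.Basis.span_apply]
  have hU : ∀ i, (U i : M) = u i := fun i => by simp [U, Module.Basis.span_apply]
  have := A.invertibleToMatrix U
  refine ⟨A.toMatrix U, isUnit_of_invertible _, fun i => ?_⟩
  rw [← hU, ← A.sum_toMatrix_smul_self U i]
  simp only [Submodule.coe_sum, Submodule.coe_smul, hA]

lemma sum_smul_mul_mul_sum_eq_sum_mul_mul {a u v : ι → Module.End K X} (P : Matrix ι ι K)
    (hP : ∀ i, u i = ∑ j, P j i • a j) (x : Module.End K X) :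
    ∑ j, a j * x * ∑ i, P j i • v i = ∑ i, u i * x * v i := by
  simp only [hP, mul_sum, sum_mul, mul_smul_comm, smul_mul_assoc]
  exact sum_comm

lemma eq_sum_smul_of_sum_mul_mul_eq {a b u v : ι → Module.End K X}
    (ha : LinearIndependent K a) (P : Matrix ι ι K) (hP : ∀ i, u i = ∑ j, P j i • a j)
    (heq : ∀ x : Module.End K X, ∑ i, a i * x * b i = ∑ i, u i * x * v i) (j : ι) :
    b j = ∑ i, P j i • v i := by
  refine sub_eq_zero.mp <| ha.eq_zero_of_forall_sum_mul_mul_eq_zero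
    (c := fun j => b j - ∑ i, P j i • v i) (fun x => ?_) j
  simp only [mul_sub, sum_sub_distrib, heq, sum_smul_mul_mul_sum_eq_sum_mul_mul P hP, sub_self]

lemma Matrix.eq_sum_inv_smul_of_eq_sum_smul [DecidableEq ι] {M : Type*} [AddCommGroup M]
    [Module K M] {P : Matrix ι ι K} (hP : IsUnit P) {b v : ι → M}
    (hb : ∀ j, b j = ∑ i, P j i • v i) (i : ι) :
    v i = ∑ k, P⁻¹ i k • b k := by
  have hinv : P⁻¹ * P = 1 := P.nonsing_inv_mul ((P.isUnit_iff_isUnit_det).mp hP)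
  calc v i = ∑ m, (P⁻¹ * P) i m • v m := by simp [hinv, Matrix.one_apply, ite_smul]
    _ = ∑ k, P⁻¹ i k • b k := by
      simp only [hb, Matrix.mul_apply, sum_smul, smul_sum, smul_smul]
      exact sum_comm

end

theorem stmt_13 {X : Type*} [AddCommGroup X] [Module ℂ X]
    (n : ℕ) (a b u v : Fin n → Module.End ℂ X)
    (ha : LinearIndependent ℂ a) (hu : LinearIndependent ℂ u)
    (hspan : Submodule.span ℂ (Set.range a) = Submodule.span ℂ (Set.range u))
    (heq : ∀ x : Module.End ℂ X,
      ∑ i : Fin n, a i * x * b i = ∑ i : Fin n, u i * x * v i) :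
    ∃ P : Matrix (Fin n) (Fin n) ℂ, IsUnit P ∧
      (∀ i, u i = ∑ j : Fin n, P j i • a j) ∧
      ∀ i j, v i * u j =
        ∑ k : Fin n, ∑ l : Fin n, (P⁻¹ i k * P l j) • (b k * a l) := by
  obtain ⟨P, hPunit, hP⟩ := exists_isUnit_matrix_of_span_eq ha hu hspan
  have hb := eq_sum_smul_of_sum_mul_mul_eq ha P hP heq
  refine ⟨P, hPunit, hP, fun i j => ?_⟩
  rw [Matrix.eq_sum_inv_smul_of_eq_sum_smul hPunit hb i, hP j, sum_mul]
  simp only [mul_sum, smul_mul_smul_comm]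
end

section
/- Let u₁,u₂,u₃,v₁,v₂,v₃ be linear operators on a complex vector space X satisfying the relations of Theorem 3 case (ii): v₁u₁ = v₁u₃ = v₃u₁ = v₃u₃ = v₂u₂ = 0, v₁u₂ = ζ₁⊗f = v₂u₃, v₂u₁ = ζ₀⊗f = −v₃u₂, for some ζ₀, ζ₁ ∈ X and f ∈ X*. Then for every x ∈ L(X), the image of φ(x)∘uⱼ (for any j and any input) lies in the 3-dimensional-or-less subspace span{u₂xζ₀, u₂xζ₁, u₁xζ₁ − u₃xζ₀}; that is, φ(x)(span{u₁η, u₂η, u₃η : η ∈ X}) ⊆ span{u₂xζ₀, u₂xζ₁, u₁xζ₁ − u₃xζ₀}, so dim φ(x)²X ≤ 3. -/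
/-!
Composing `φ(x) = Σ uᵢ x vᵢ` with `u_j` only involves the products `vᵢ u_j`, which by the
relations are zero or rank one operators `ζ ⊗ f`. Hence `φ(x) u₁ = u₂xζ₀ ⊗ f`,
`φ(x) u₂ = (u₁xζ₁ − u₃xζ₀) ⊗ f` and `φ(x) u₃ = u₂xζ₁ ⊗ f`, so `φ(x)` maps
`u₁X + u₂X + u₃X` into the span of these three vectors. Since the range of `φ(x)` lies in
`u₁X + u₂X + u₃X`, so does `φ(x)²X`, which therefore has rank at most `3`.
-/

open LinearMap Submodule

section

variable {R M : Type*} [Semiring R] [AddCommMonoid M] [Module R M]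

lemma LinearMap.mul_smulRight (g : Module.End R M) (f : M →ₗ[R] R) (w : M) :
    g * f.smulRight w = f.smulRight (g w) := by
  ext
  simp

lemma LinearMap.range_smulRight_le_span_singleton (f : M →ₗ[R] R) (w : M) :
    range (f.smulRight w) ≤ span R {w} := by
  rintro _ ⟨a, rfl⟩
  exact smul_mem _ _ (mem_span_singleton_self w)

lemma map_range_le_of_mul_eq_smulRight {g a : Module.End R M} {f : M →ₗ[R] R} {w : M}
    {S : Submodule R M} (h : g * a = f.smulRight w) (hw : w ∈ S) :
    (range a).map g ≤ S := by
  rw [← range_comp, ← Module.End.mul_eq_comp, h]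
  exact (range_smulRight_le_span_singleton f w).trans (span_singleton_le_iff_mem w S |>.mpr hw)

lemma rank_span_triple_le [StrongRankCondition R] (a b c : M) :
    Module.rank R (span R {a, b, c}) ≤ 3 := by
  classical
  have h := rank_span_finset_le (R := R) ({a, b, c} : Finset M)
  rw [Finset.coe_insert, Finset.coe_insert, Finset.coe_singleton] at h
  exact h.trans (by exact_mod_cast Finset.card_le_three)

variable (u₁ u₂ u₃ v₁ v₂ v₃ x : Module.End R M)

lemma sandwich_mul (w : Module.End R M) :
    (u₁ * x * v₁ + u₂ * x * v₂ + u₃ * x * v₃) * w =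
      u₁ * x * (v₁ * w) + u₂ * x * (v₂ * w) + u₃ * x * (v₃ * w) := by
  simp only [add_mul, mul_assoc]

lemma range_sandwich_le :
    range (u₁ * x * v₁ + u₂ * x * v₂ + u₃ * x * v₃) ≤ range u₁ ⊔ range u₂ ⊔ range u₃ := by
  simp only [mul_assoc]
  refine (range_add_le _ _).trans (sup_le_sup ((range_add_le _ _).trans ?_) ?_)
  · exact sup_le_sup (range_comp_le_range _ _) (range_comp_le_range _ _)
  · exact range_comp_le_range _ _

end
theorem stmt_18 {X : Type*} [AddCommGroup X] [Module ℂ X]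
    (u₁ u₂ u₃ v₁ v₂ v₃ : Module.End ℂ X) (ζ₀ ζ₁ : X) (f : Module.Dual ℂ X)
    (h11 : v₁ * u₁ = 0) (h13 : v₁ * u₃ = 0) (h31 : v₃ * u₁ = 0)
    (h33 : v₃ * u₃ = 0) (h22 : v₂ * u₂ = 0)
    (h12 : ∀ η, (v₁ * u₂) η = f η • ζ₁) (h23 : ∀ η, (v₂ * u₃) η = f η • ζ₁)
    (h21 : ∀ η, (v₂ * u₁) η = f η • ζ₀) (h32 : ∀ η, (v₃ * u₂) η = -(f η • ζ₀))
    (x : Module.End ℂ X) :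
    (∀ η ∈ LinearMap.range u₁ ⊔ LinearMap.range u₂ ⊔ LinearMap.range u₃,
      (u₁ * x * v₁ + u₂ * x * v₂ + u₃ * x * v₃) η ∈
        Submodule.span ℂ {u₂ (x ζ₀), u₂ (x ζ₁), u₁ (x ζ₁) - u₃ (x ζ₀)}) ∧
    Module.rank ℂ
      (LinearMap.range ((u₁ * x * v₁ + u₂ * x * v₂ + u₃ * x * v₃) *
        (u₁ * x * v₁ + u₂ * x * v₂ + u₃ * x * v₃))) ≤ 3 := by
  set φ : Module.End ℂ X := u₁ * x * v₁ + u₂ * x * v₂ + u₃ * x * v₃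
  set S := span ℂ {u₂ (x ζ₀), u₂ (x ζ₁), u₁ (x ζ₁) - u₃ (x ζ₀)}
  have hφu₁ : φ * u₁ = f.smulRight (u₂ (x ζ₀)) := by
    rw [sandwich_mul, h11, h31, LinearMap.ext (g := f.smulRight ζ₀) h21]
    simp [mul_smulRight]
  have hφu₂ : φ * u₂ = f.smulRight (u₁ (x ζ₁) - u₃ (x ζ₀)) := by
    rw [sandwich_mul, h22, LinearMap.ext (g := f.smulRight ζ₁) h12,
      LinearMap.ext (g := -f.smulRight ζ₀) h32]
    ext
    simp [sub_eq_add_neg]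
  have hφu₃ : φ * u₃ = f.smulRight (u₂ (x ζ₁)) := by
    rw [sandwich_mul, h13, h33, LinearMap.ext (g := f.smulRight ζ₁) h23]
    simp [mul_smulRight]
  have himage : (range u₁ ⊔ range u₂ ⊔ range u₃).map φ ≤ S := by
    simp only [Submodule.map_sup]
    exact sup_le (sup_le (map_range_le_of_mul_eq_smulRight hφu₁ (subset_span (by simp)))
      (map_range_le_of_mul_eq_smulRight hφu₂ (subset_span (by simp))))
      (map_range_le_of_mul_eq_smulRight hφu₃ (subset_span (by simp)))
  refine ⟨fun η hη => himage (mem_map_of_mem hη), ?_⟩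
  have hsq : range (φ * φ) ≤ S := by
    rw [Module.End.mul_eq_comp, range_comp]
    exact (map_mono (range_sandwich_le u₁ u₂ u₃ v₁ v₂ v₃ x)).trans himage
  exact (rank_mono hsq).trans (rank_span_triple_le _ _ _)
end

section
/- Let X be a complex vector space with dim X ≥ 2 and let a₁,a₂,b₁,b₂ ∈ L(X) with {a₁,a₂} linearly independent but locally linearly dependent (i.e., a₁ζ and a₂ζ are linearly dependent for every ζ ∈ X), so that by Brešar–Šemrl there exist ζ₀ ∈ X and functionals f₁,f₂ with aᵢ = ζ₀⊗fᵢ. If φ(x) = a₁xb₁ + a₂xb₂ has no nonzero eigenvalue for every x ∈ L(X), then b₁ζ₀ = b₂ζ₀ = 0 and consequently φ(x)φ(y) = 0 for all x,y ∈ L(X). -/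
/-!
Since `a₁, a₂` have range `ℂ ζ₀`, every `φ(x) = a₁ x b₁ + a₂ x b₂` maps `ζ₀` to
`(f₁ (x b₁ ζ₀) + f₂ (x b₂ ζ₀)) • ζ₀`, so `ζ₀` is an eigenvector unless that scalar vanishes.
Hence `f₁ ∘ x` applied to `b₁ ζ₀` plus `f₂ ∘ x` applied to `b₂ ζ₀` is zero for every `x`; taking
`x = g ⊗ v` rank one gives `g (b₁ ζ₀) • f₁ + g (b₂ ζ₀) • f₂ = 0` for every functional `g`, and
linear independence of `f₁, f₂` forces `b₁ ζ₀ = b₂ ζ₀ = 0`. Then `φ(x)` kills `ζ₀`, which spans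
the range of every `φ(y)`.
-/

namespace Module.End

variable {K X : Type*} [Field K] [AddCommGroup X] [Module K X]

lemma eq_zero_of_apply_eq_smul {T : End K X} (hT : ∀ c, c ≠ 0 → ¬ T.HasEigenvalue c)
    {v : X} (hv : v ≠ 0) {c : K} (hTv : T v = c • v) : c = 0 := by
  by_contra hc
  exact hT c hc (hasEigenvalue_of_hasEigenvector ⟨mem_eigenspace_iff.mpr hTv, hv⟩)

lemma rankOne_sandwich_apply {ζ₀ : X} {f₁ f₂ : Dual K X} {a₁ a₂ : End K X}
    (ha₁ : ∀ η, a₁ η = f₁ η • ζ₀) (ha₂ : ∀ η, a₂ η = f₂ η • ζ₀) (b₁ b₂ x : End K X) (η : X) :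
    (a₁ * x * b₁ + a₂ * x * b₂) η = (f₁ (x (b₁ η)) + f₂ (x (b₂ η))) • ζ₀ := by
  simp [ha₁, ha₂, add_smul]

end Module.End

lemma LinearIndependent.eq_zero_of_forall_end_apply_add_eq_zero {K X : Type*} [Field K]
    [AddCommGroup X] [Module K X] {f₁ f₂ : Module.Dual K X}
    (hf : LinearIndependent K ![f₁, f₂]) {u₁ u₂ : X}
    (h : ∀ x : Module.End K X, f₁ (x u₁) + f₂ (x u₂) = 0) : u₁ = 0 ∧ u₂ = 0 := by
  have hg : ∀ g : Module.Dual K X, g u₁ = 0 ∧ g u₂ = 0 := fun g =>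
    LinearIndependent.pair_iff.mp hf _ _ <| LinearMap.ext fun v => by
      simpa [mul_comm] using h (g.smulRight v)
  exact ⟨(Module.forall_dual_apply_eq_zero_iff K u₁).mp fun g => (hg g).1,
    (Module.forall_dual_apply_eq_zero_iff K u₂).mp fun g => (hg g).2⟩

theorem stmt_19_general {X : Type*} [AddCommGroup X] [Module ℂ X]
    (ζ₀ : X) (f₁ f₂ : Module.Dual ℂ X) (hf : LinearIndependent ℂ ![f₁, f₂])
    (a₁ a₂ b₁ b₂ : Module.End ℂ X)
    (ha₁ : ∀ η, a₁ η = f₁ η • ζ₀) (ha₂ : ∀ η, a₂ η = f₂ η • ζ₀)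
    (h : ∀ x : Module.End ℂ X, ∀ c : ℂ, c ≠ 0 →
      ¬ Module.End.HasEigenvalue (a₁ * x * b₁ + a₂ * x * b₂) c) :
    b₁ ζ₀ = 0 ∧ b₂ ζ₀ = 0 ∧
      ∀ x y : Module.End ℂ X,
        (a₁ * x * b₁ + a₂ * x * b₂) * (a₁ * y * b₁ + a₂ * y * b₂) = 0 := by
  have hφ := Module.End.rankOne_sandwich_apply ha₁ ha₂ b₁ b₂
  have hscalar : ∀ x : Module.End ℂ X, f₁ (x (b₁ ζ₀)) + f₂ (x (b₂ ζ₀)) = 0 := by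
    intro x
    rcases eq_or_ne ζ₀ 0 with hζ₀ | hζ₀
    · simp [hζ₀]
    · exact Module.End.eq_zero_of_apply_eq_smul (h x) hζ₀ (hφ x ζ₀)
  obtain ⟨hb₁, hb₂⟩ := hf.eq_zero_of_forall_end_apply_add_eq_zero hscalar
  refine ⟨hb₁, hb₂, fun x y => LinearMap.ext fun η => ?_⟩
  simp [Module.End.mul_apply, hφ y η, hφ x ζ₀, hb₁, hb₂]

theorem stmt_19 {X : Type*} [AddCommGroup X] [Module ℂ X]
    (hdim : 2 ≤ Module.rank ℂ X)
    (ζ₀ : X) (f₁ f₂ : Module.Dual ℂ X) (hf : LinearIndependent ℂ ![f₁, f₂])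
    (a₁ a₂ b₁ b₂ : Module.End ℂ X)
    (ha₁ : ∀ η, a₁ η = f₁ η • ζ₀) (ha₂ : ∀ η, a₂ η = f₂ η • ζ₀)
    (h : ∀ x : Module.End ℂ X, ∀ c : ℂ, c ≠ 0 →
      ¬ Module.End.HasEigenvalue (a₁ * x * b₁ + a₂ * x * b₂) c) :
    b₁ ζ₀ = 0 ∧ b₂ ζ₀ = 0 ∧
      ∀ x y : Module.End ℂ X,
        (a₁ * x * b₁ + a₂ * x * b₂) * (a₁ * y * b₁ + a₂ * y * b₂) = 0 :=
  stmt_19_general ζ₀ f₁ f₂ hf a₁ a₂ b₁ b₂ ha₁ ha₂ h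
end
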